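/- arXiv:1811.00749 — 3 statements merged into one kernel-verified Lean document; each statement's English description precedes it below -/
import Mathlib

section
/- For every real cost parameter α and every real potential ψ₀, the soft-margin RFGB objective for a positive example, L⁺(ψ) = ψ − log(exp ψ + exp α), has derivative at ψ₀ equal to 1 − p/(p + (1 − p)·exp α), where p = exp ψ₀/(exp ψ₀ + 1) is the predicted probability of the example being positive. -/
open Real

/-- Multiplying the odds `a` of `p = a / (a + 1)` by `c`. No hypothesis `a + c ≠ 0` is needed:
both sides are then `0` by the convention `x / 0 = 0`. -/
theorem div_add_one_reweight {K : Type*} [Field K] {a : K} (c : K) (ha : a + 1 ≠ 0) :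
    a / (a + 1) / (a / (a + 1) + (1 - a / (a + 1)) * c) = a / (a + c) := by
  have hdenom : a / (a + 1) + (1 - a / (a + 1)) * c = (a + c) / (a + 1) := by
    field_simp
    ring
  rw [hdenom, div_div_div_cancel_right₀ ha]

theorem hasDerivAt_sub_log_exp_add_exp (α ψ₀ : ℝ) :
    HasDerivAt (fun ψ : ℝ => ψ - log (exp ψ + exp α))
      (1 - exp ψ₀ / (exp ψ₀ + exp α)) ψ₀ := by
  have hlog : HasDerivAt (fun ψ : ℝ => log (exp ψ + exp α)) (exp ψ₀ / (exp ψ₀ + exp α)) ψ₀ :=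
    ((hasDerivAt_exp ψ₀).add_const (exp α)).log (by positivity)
  exact (hasDerivAt_id' ψ₀).sub hlog

/-- For every real cost parameter `α` and every real potential `ψ₀`, the soft-margin RFGB
objective for a positive example, `L⁺(ψ) = ψ − log(exp ψ + exp α)`, has derivative at `ψ₀`
equal to `1 − p/(p + (1 − p)·exp α)`, where `p = exp ψ₀/(exp ψ₀ + 1)`. -/
theorem softmargin_pos_gradient (α ψ₀ : ℝ) :
    HasDerivAt (fun ψ : ℝ => ψ - Real.log (Real.exp ψ + Real.exp α))
      (1 - (Real.exp ψ₀ / (Real.exp ψ₀ + 1)) /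
        ((Real.exp ψ₀ / (Real.exp ψ₀ + 1)) +
          (1 - Real.exp ψ₀ / (Real.exp ψ₀ + 1)) * Real.exp α)) ψ₀ := by
  rw [div_add_one_reweight _ (by positivity)]
  exact hasDerivAt_sub_log_exp_add_exp α ψ₀
end

section
/- For every real cost parameter β and every real potential ψ₀, the soft-margin RFGB objective for a negative example, L⁻(ψ) = −log(exp(ψ + β) + 1), has derivative at ψ₀ equal to −p·exp β/(p·exp β + (1 − p)), where p = exp ψ₀/(exp ψ₀ + 1) is the predicted probability of the example being positive. -/
open Real

theorem hasDerivAt_neg_log_exp_add_one (x : ℝ) :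
    HasDerivAt (fun ψ : ℝ => -log (exp ψ + 1)) (-(exp x / (exp x + 1))) x :=
  (((hasDerivAt_exp x).add_const 1).log (by positivity)).neg

/-- Reweighting the odds `p / (1 - p)` of `p = a / (a + 1)` by `c` gives the odds `a * c`. -/
theorem div_add_one_mul_div_eq_mul_div_mul_add_one {a : ℝ} (c : ℝ) (ha : a + 1 ≠ 0) :
    a / (a + 1) * c / (a / (a + 1) * c + (1 - a / (a + 1))) = a * c / (a * c + 1) := by
  have hdenom : a / (a + 1) * c + (1 - a / (a + 1)) = (a * c + 1) / (a + 1) := by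
    field_simp
    ring
  rw [hdenom, div_mul_eq_mul_div, div_div_div_cancel_right₀ ha]

/-- For every real cost parameter `β` and every real potential `ψ₀`, the soft-margin RFGB
objective for a negative example, `L⁻(ψ) = −log(exp(ψ + β) + 1)`, has derivative at `ψ₀`
equal to `−p·exp β/(p·exp β + (1 − p))`, where `p = exp ψ₀/(exp ψ₀ + 1)`. -/
theorem softmargin_neg_gradient (β ψ₀ : ℝ) :
    HasDerivAt (fun ψ : ℝ => -Real.log (Real.exp (ψ + β) + 1))
      (-((Real.exp ψ₀ / (Real.exp ψ₀ + 1)) * Real.exp β) /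
        ((Real.exp ψ₀ / (Real.exp ψ₀ + 1)) * Real.exp β +
          (1 - Real.exp ψ₀ / (Real.exp ψ₀ + 1)))) ψ₀ := by
  have hderiv := (hasDerivAt_neg_log_exp_add_one (ψ₀ + β)).comp_add_const ψ₀ β
  rwa [neg_div, div_add_one_mul_div_eq_mul_div_mul_add_one _ (by positivity), ← exp_add]
end

section
/- For every residence time T > 0, the positive-example log-likelihood of RCTBN learning, L⁺(ψ) = log(1 − exp(−T·exp ψ)), is a concave function of ψ on all of ℝ (its second derivative is nonpositive everywhere); hence the log-likelihood has a global maximum behavior in the functional parameter. -/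
/-!
As `T * exp ψ = exp (log T + ψ)`, the function is a translate of `x ↦ log (1 - exp (-exp x))`.
The derivative of the latter is `u / (exp u - 1)` at `u = exp x`: the reciprocal of the slope of
the secant of `exp` through `0` and `u`, which increases with `u` because `exp` is convex.
So the derivative is antitone and the function is concave.
-/

open Real Set

lemma Real.monotoneOn_exp_sub_one_div : MonotoneOn (fun u => (exp u - 1) / u) (Ioi 0) := by
  intro x hx y hy hxy
  simpa using convexOn_exp.secant_mono (mem_univ 0) (mem_univ x) (mem_univ y)
    (ne_of_gt hx) (ne_of_gt hy) hxy

lemma Real.antitoneOn_div_exp_sub_one : AntitoneOn (fun u => u / (exp u - 1)) (Ioi 0) := by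
  intro x hx y hy hxy
  have slope_pos : ∀ u ∈ Ioi (0 : ℝ), 0 < (exp u - 1) / u := fun u hu =>
    div_pos (by simpa using exp_lt_exp.2 hu) hu
  simpa only [inv_div] using
    (inv_le_inv₀ (slope_pos y hy) (slope_pos x hx)).2 (monotoneOn_exp_sub_one_div hx hy hxy)

lemma Real.hasDerivAt_log_one_sub_exp_neg_exp (x : ℝ) :
    HasDerivAt (fun x => log (1 - exp (-exp x))) (exp x / (exp (exp x) - 1)) x := by
  have hpos : 0 < 1 - exp (-exp x) := sub_pos.2 (exp_lt_one_iff.2 (neg_neg_iff_pos.2 (exp_pos x)))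
  have hderiv := (((hasDerivAt_exp x).fun_neg.exp).const_sub 1).log hpos.ne'
  convert hderiv using 1
  have : exp (exp x) - 1 ≠ 0 := (sub_pos.2 (one_lt_exp_iff.2 (exp_pos x))).ne'
  rw [exp_neg]
  field_simp

lemma Real.concaveOn_log_one_sub_exp_neg_exp :
    ConcaveOn ℝ univ (fun x => log (1 - exp (-exp x))) := by
  have hderiv := hasDerivAt_log_one_sub_exp_neg_exp
  refine AntitoneOn.concaveOn_of_deriv convex_univ
    (fun x _ => (hderiv x).continuousAt.continuousWithinAt)
    (fun x _ => (hderiv x).differentiableAt.differentiableWithinAt) ?_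
  intro x _ y _ hxy
  simp only [(hderiv _).deriv]
  exact antitoneOn_div_exp_sub_one (exp_pos x) (exp_pos y) (exp_le_exp.2 hxy)

/-- For every residence time `T > 0`, the positive-example log-likelihood of RCTBN learning,
`L⁺(ψ) = log(1 − exp(−T·exp ψ))`, is a concave function of `ψ` on all of `ℝ`. -/
theorem rctbn_pos_concave (T : ℝ) (hT : 0 < T) :
    ConcaveOn ℝ Set.univ
      (fun ψ : ℝ => Real.log (1 - Real.exp (-(T * Real.exp ψ)))) := by
  have hshift : ∀ ψ, T * exp ψ = exp (log T + ψ) := fun ψ => by rw [exp_add, exp_log hT]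
  have hcomp : (fun ψ => log (1 - exp (-(T * exp ψ))))
      = (fun x => log (1 - exp (-exp x))) ∘ fun ψ => log T + ψ := by
    simp only [hshift, Function.comp_def]
  rw [hcomp, ← preimage_univ (f := fun ψ : ℝ => log T + ψ)]
  exact concaveOn_log_one_sub_exp_neg_exp.translate_right (log T)
end
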